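/- Let m ∈ ℤ∖{0} and α ∈ ℤ, and let h : ℝ → ℂ be such that Σ_{k∈ℤ} |h(x + k + α/(2m))| < ∞ for every x ∈ ℝ. Then for all (a,b,c) ∈ ℤ³ and all (x,y,z) ∈ ℝ³: θ_α(h)(a+x, b+y+2az, c+z) = θ_α(h)(x,y,z). That is, θ_α(h) is invariant under left translation by the integer points of the Heisenberg group law (a,b,c)·(x,y,z) := (a+x, b+y+2az, c+z) on ℝ³. -/
import Mathlib


noncomputable section

/-- `e(x) = exp(2πix)`. -/
def e (x : ℝ) : ℂ := Complex.exp (2 * Real.pi * Complex.I * x)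

/-- The theta transform
`θ_α(h)(x,y,z) = Σ_{k∈ℤ} e(m·y + (2km+α)·z)·h(x + k + α/(2m))`. -/
def theta (m α : ℤ) (h : ℝ → ℂ) (x y z : ℝ) : ℂ :=
  ∑' k : ℤ, e ((m : ℝ) * y + ((2 * k * m + α : ℤ) : ℝ) * z) *
    h (x + (k : ℝ) + (α : ℝ) / (2 * (m : ℝ)))

lemma e_add_int (x : ℝ) (n : ℤ) : e (x + n) = e x := by
  unfold e
  push_cast
  rw [mul_add, Complex.exp_add]
  have : Complex.exp (2 * Real.pi * Complex.I * n) = 1 := by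
    rw [show (2 * Real.pi * Complex.I * n : ℂ) = n * (2 * Real.pi * Complex.I) by ring]
    exact Complex.exp_int_mul_two_pi_mul_I n
  rw [this, mul_one]

theorem statement17 (m : ℤ) (hm : m ≠ 0) (α : ℤ) (h : ℝ → ℂ)
    (hsum : ∀ x : ℝ,
      Summable fun k : ℤ => ‖h (x + (k : ℝ) + (α : ℝ) / (2 * (m : ℝ)))‖) :
    ∀ (a b c : ℤ) (x y z : ℝ),
      theta m α h ((a : ℝ) + x) ((b : ℝ) + y + 2 * (a : ℝ) * z) ((c : ℝ) + z) =
        theta m α h x y z := by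
  intro a b c x y z
  unfold theta
  rw [← (Equiv.subRight a).tsum_eq]
  apply tsum_congr
  intro j
  have harg : ((a : ℝ) + x) + ((Equiv.subRight a j : ℤ) : ℝ) + (α : ℝ) / (2 * (m : ℝ))
      = x + (j : ℝ) + (α : ℝ) / (2 * (m : ℝ)) := by
    simp only [Equiv.subRight_apply]
    push_cast
    ring
  have hexp : (m : ℝ) * ((b : ℝ) + y + 2 * (a : ℝ) * z)
        + ((2 * (Equiv.subRight a j : ℤ) * m + α : ℤ) : ℝ) * ((c : ℝ) + z)
      = ((m : ℝ) * y + ((2 * j * m + α : ℤ) : ℝ) * z)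
        + ((m * b + (2 * j * m - 2 * a * m + α) * c : ℤ) : ℝ) := by
    simp only [Equiv.subRight_apply]
    push_cast
    ring
  rw [harg, hexp, e_add_int]

end
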